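/- Let `t` be a valid Patricia trie and let `π = π₀ ++ [b]` be a nonempty position with `subtreeAt t π = some (leaf v_d)` and `subtreeAt t π₀ = some (node s l r)`. Suppose `s ++ [b]` is a prefix of `v_i`. Then `replaceAt t π (leaf v_i)` is valid and `leafLabels (replaceAt t π (leaf v_i)) = (leafLabels t \ {v_d}) ∪ {v_i}`. (Special case 1 of the paper's replace operation, where both searches return the same leaf: Case 4 of Invariant 1 and Case 1 of Lemma `successful-special-mov-lem`.) -/

import Mathlib

inductive PTrie : Type
  | leaf (s : List Bool) : PTrie
  | node (s : List Bool) (l r : PTrie) : PTrie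

/-- Label at the root of a trie. -/
def lbl : PTrie → List Bool
  | .leaf s => s
  | .node s _ _ => s

/-- A trie is valid if for every internal node `node s l r`,
`s ++ [false]` is a prefix of `lbl l` and `s ++ [true]` is a prefix of `lbl r`. -/
def Valid : PTrie → Prop
  | .leaf _ => True
  | .node s l r => ((s ++ [false]) <+: lbl l) ∧ ((s ++ [true]) <+: lbl r) ∧ Valid l ∧ Valid r

/-- Subtree at a position: descend left on `false`, right on `true`. -/
def subtreeAt : PTrie → List Bool → Option PTrie
  | t, [] => some t
  | .leaf _, _ :: _ => none
  | .node _ l r, b :: π => subtreeAt (if b then r else l) π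

/-- Set of binary strings appearing at the leaves. -/
def leafLabels : PTrie → Set (List Bool)
  | .leaf s => {s}
  | .node _ l r => leafLabels l ∪ leafLabels r

/-- Sequential search. -/
def search (v : List Bool) : PTrie → PTrie
  | .leaf s => .leaf s
  | .node s l r =>
    if s <+: v ∧ s ≠ v then
      (if v.getD s.length false then search v r else search v l)
    else .node s l r

/-- Position of the node returned by `search`. -/
def searchPos (v : List Bool) : PTrie → List Bool
  | .leaf _ => []
  | .node s l r =>
    if s <+: v ∧ s ≠ v then
      (if v.getD s.length false then true :: searchPos v r else false :: searchPos v l)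
    else []

/-- Replace the subtree at a position. -/
def replaceAt : PTrie → List Bool → PTrie → PTrie
  | _, [], u => u
  | .leaf s, _ :: _, _ => .leaf s
  | .node s l r, b :: π, u =>
    if b then .node s l (replaceAt r π u) else .node s (replaceAt l π u) r

/-- Longest common prefix of two binary strings. -/
def lcp : List Bool → List Bool → List Bool
  | a :: as, b :: bs => if a = b then a :: lcp as bs else []
  | _, _ => []

/-- Join two tries under a new internal node labelled by the
longest common prefix of their labels. -/
def join (t₁ t₂ : PTrie) : PTrie :=
  if (lbl t₁).getD (lcp (lbl t₁) (lbl t₂)).length true then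
    .node (lcp (lbl t₁) (lbl t₂)) t₂ t₁
  else
    .node (lcp (lbl t₁) (lbl t₂)) t₁ t₂

/-- Sequential insert. -/
def insertT (v : List Bool) : PTrie → PTrie
  | .node s l r =>
    if s <+: v ∧ s ≠ v then
      (if v.getD s.length false then .node s l (insertT v r) else .node s (insertT v l) r)
    else join (.node s l r) (.leaf v)
  | .leaf s => join (.leaf s) (.leaf v)

/-!
Only the parent `node s l r` constrains the label of the replaced leaf, and `s ++ [b] <+: vi`
is exactly that constraint; the labels of all other nodes are unchanged. For the leaf labels,
the subtrees of the two children of a valid node have disjoint leaf labels (they extend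
`s ++ [false]` and `s ++ [true]` respectively), so `vd` occurs nowhere outside the replaced leaf.
-/

theorem Valid.lbl_prefix_of_mem_leafLabels {t : PTrie} (hv : Valid t) {v : List Bool}
    (hmem : v ∈ leafLabels t) : lbl t <+: v := by
  induction t with
  | leaf s => exact (Set.mem_singleton_iff.mp hmem) ▸ List.prefix_rfl
  | node s l r ihl ihr =>
    obtain ⟨hl, hr, hvl, hvr⟩ := hv
    rcases hmem with hmem | hmem
    · exact (List.prefix_append s [false]).trans (hl.trans (ihl hvl hmem))
    · exact (List.prefix_append s [true]).trans (hr.trans (ihr hvr hmem))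

theorem Valid.disjoint_leafLabels {s : List Bool} {l r : PTrie} (hv : Valid (.node s l r)) :
    Disjoint (leafLabels l) (leafLabels r) := by
  obtain ⟨hl, hr, hvl, hvr⟩ := hv
  refine Set.disjoint_left.mpr fun v hvl' hvr' => ?_
  have hfalse := hl.trans (hvl.lbl_prefix_of_mem_leafLabels hvl')
  have htrue := hr.trans (hvr.lbl_prefix_of_mem_leafLabels hvr')
  have heq : s ++ [false] = s ++ [true] :=
    (List.prefix_of_prefix_length_le hfalse htrue (by simp)).eq_of_length (by simp)
  simp at heq

theorem leafLabels_subset_of_subtreeAt {t u : PTrie} {π : List Bool}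
    (h : subtreeAt t π = some u) : leafLabels u ⊆ leafLabels t := by
  induction π generalizing t with
  | nil => exact (Option.some.inj h) ▸ subset_rfl
  | cons c π ih =>
    cases t with
    | leaf _ => simp [subtreeAt] at h
    | node s l r =>
      cases c
      · exact (ih h).trans Set.subset_union_left
      · exact (ih h).trans Set.subset_union_right

@[simp]
theorem replaceAt_nil (t u : PTrie) : replaceAt t [] u = u := by
  cases t <;> rfl

theorem lbl_replaceAt {π : List Bool} (hπ : π ≠ []) (t u : PTrie) :
    lbl (replaceAt t π u) = lbl t := by
  obtain ⟨c, π, rfl⟩ := List.exists_cons_of_ne_nil hπ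
  cases t <;> cases c <;> rfl

theorem leafLabels_replaceAt {t u u' : PTrie} {π : List Bool} (hv : Valid t)
    (h : subtreeAt t π = some u) :
    leafLabels (replaceAt t π u') = (leafLabels t \ leafLabels u) ∪ leafLabels u' := by
  induction π generalizing t with
  | nil => simp [(Option.some.inj h).symm]
  | cons c π ih =>
    cases t with
    | leaf _ => simp [subtreeAt] at h
    | node s l r =>
      have hdisj := hv.disjoint_leafLabels
      cases c
      · have hru : Disjoint (leafLabels r) (leafLabels u) :=
          hdisj.symm.mono_right (leafLabels_subset_of_subtreeAt (t := l) h)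
        change leafLabels (replaceAt l π u') ∪ leafLabels r = _
        rw [ih hv.2.2.1 h, leafLabels, Set.union_sdiff_distrib, hru.sdiff_eq_left,
          Set.union_right_comm]
      · have hlu : Disjoint (leafLabels l) (leafLabels u) :=
          hdisj.mono_right (leafLabels_subset_of_subtreeAt (t := r) h)
        change leafLabels l ∪ leafLabels (replaceAt r π u') = _
        rw [ih hv.2.2.2 h, leafLabels, Set.union_sdiff_distrib, hlu.sdiff_eq_left,
          Set.union_assoc]

theorem Valid.replaceAt_append {t u : PTrie} {π₀ s : List Bool} {l r : PTrie} {b : Bool}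
    (hv : Valid t) (hπ₀ : subtreeAt t π₀ = some (.node s l r)) (hu : Valid u)
    (hsu : s ++ [b] <+: lbl u) : Valid (replaceAt t (π₀ ++ [b]) u) := by
  induction π₀ generalizing t with
  | nil =>
    obtain rfl := Option.some.inj hπ₀
    obtain ⟨hl, hr, hvl, hvr⟩ := hv
    cases b
    · simpa [replaceAt] using ⟨hsu, hr, hu, hvr⟩
    · simpa [replaceAt] using ⟨hl, hsu, hvl, hu⟩
  | cons c π ih =>
    cases t with
    | leaf _ => simp [subtreeAt] at hπ₀
    | node s' l' r' =>
      obtain ⟨hl, hr, hvl, hvr⟩ := hv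
      have hlbl := lbl_replaceAt (π := π ++ [b]) (by simp) (u := u)
      cases c
      · exact ⟨(hlbl l').symm ▸ hl, hr, ih hvl hπ₀, hvr⟩
      · exact ⟨hl, (hlbl r').symm ▸ hr, hvl, ih hvr hπ₀⟩

/-- Special case 1 of the replace operation: replacing a leaf in place. -/
theorem replace_special_case1 (t : PTrie) (hv : Valid t)
    (π₀ : List Bool) (b : Bool) (vd vi s : List Bool) (l r : PTrie)
    (hπ : subtreeAt t (π₀ ++ [b]) = some (PTrie.leaf vd))
    (hπ0 : subtreeAt t π₀ = some (PTrie.node s l r))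
    (hpre : (s ++ [b]) <+: vi) :
    Valid (replaceAt t (π₀ ++ [b]) (PTrie.leaf vi)) ∧
    leafLabels (replaceAt t (π₀ ++ [b]) (PTrie.leaf vi)) =
      (leafLabels t \ {vd}) ∪ {vi} :=
  ⟨hv.replaceAt_append hπ0 trivial hpre, leafLabels_replaceAt hv hπ⟩
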